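/- arXiv:2502.01598 — 3 statements merged into one kernel-verified Lean document; each statement's English description precedes it below -/
import Mathlib

section
/- Let p be an odd prime and let G be a finite semi-extraspecial p-group. If G has an automorphism φ that acts transitively on the nontrivial cosets of Z(G) in G (i.e., for all x, y ∈ G with x ∉ Z(G) and y ∉ Z(G) there exists a natural number n with φ^n(x)·y⁻¹ ∈ Z(G)), then G has exponent p, that is, g^p = 1 for every g ∈ G. -/
/-- A finite `p`-group `G` is extraspecial if `|Z(G)| = p` and `Z(G) = [G,G]`. -/
def IsExtraspecial (p : ℕ) (G : Type*) [Group G] : Prop :=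
  Nat.card (Subgroup.center G) = p ∧ Subgroup.center G = commutator G

/-- A finite `p`-group `G` is semi-extraspecial if `G/N` is extraspecial for every
maximal subgroup `N` of the center `Z(G)`. -/
def IsSemiExtraspecial (p : ℕ) (G : Type*) [Group G] : Prop :=
  ∀ (N : Subgroup G) [N.Normal], N ≤ Subgroup.center G →
    IsCoatom (N.subgroupOf (Subgroup.center G)) →
    IsExtraspecial p (G ⧸ N)

/-!
Pick a maximal subgroup `N₀` of `Z(G)`. As `G ⧸ N₀` is extraspecial and `Z(G)` is the full
preimage of its centre, commutators and `p`-th powers in `G` are central; moreover `Z(G) ≤ [G, G]`,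
so `G` has class two, its commutators and hence `Z(G)` have exponent `p`, and for odd `p` the map
`x ↦ x ^ p` is a homomorphism. If some noncentral `x` has `x ^ p = 1`, transitivity carries `x` to
any noncentral `g` modulo `Z(G)`, so `g ^ p = 1`. Otherwise the `p`-th power map has kernel `Z(G)`
and central image, so `|G : Z(G)| ≤ |Z(G)|`; but for noncentral `g` the homomorphism `y ↦ ⁅y, g⁆`
maps `G` onto `Z(G)` (its image lies in no maximal subgroup of `Z(G)`), with kernel strictly
containing `Z(G)`, so `|Z(G)| < |G : Z(G)|`.
-/

open Subgroup

open scoped commutatorElement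

section CentralCommutators

variable {G : Type*} [Group G]

lemma commutatorElement_mul_left_of_central (hG : ∀ a b : G, ⁅a, b⁆ ∈ center G) (x y b : G) :
    ⁅x * y, b⁆ = ⁅x, b⁆ * ⁅y, b⁆ := by
  have hc := mem_center_iff.mp (hG y b)
  calc ⁅x * y, b⁆ = x * ⁅y, b⁆ * x⁻¹ * ⁅x, b⁆ := by simp only [commutatorElement_def]; group
    _ = ⁅y, b⁆ * ⁅x, b⁆ := by rw [hc x, mul_inv_cancel_right]
    _ = ⁅x, b⁆ * ⁅y, b⁆ := (hc _).symm

lemma commutatorElement_pow_left_of_central (hG : ∀ a b : G, ⁅a, b⁆ ∈ center G) (a b : G)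
    (n : ℕ) : ⁅a ^ n, b⁆ = ⁅a, b⁆ ^ n :=
  map_pow (MonoidHom.mk' (⁅·, b⁆) fun x y => commutatorElement_mul_left_of_central hG x y b) a n

lemma mul_pow_of_central (hG : ∀ a b : G, ⁅a, b⁆ ∈ center G) (x y : G) (n : ℕ) :
    (x * y) ^ n = x ^ n * y ^ n * ⁅y, x⁆ ^ n.choose 2 := by
  have hswap (k : ℕ) : y ^ k * x = ⁅y, x⁆ ^ k * (x * y ^ k) := by
    rw [← commutatorElement_pow_left_of_central hG, commutatorElement_def]; group
  have hc (k : ℕ) (g : G) : g * ⁅y, x⁆ ^ k = ⁅y, x⁆ ^ k * g :=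
    mem_center_iff.mp (pow_mem (hG y x) k) g
  generalize ⁅y, x⁆ = c at hswap hc
  induction n with
  | zero => simp
  | succ n ih =>
    calc (x * y) ^ (n + 1) = x ^ n * y ^ n * (c ^ n.choose 2 * (x * y)) := by
          rw [pow_succ, ih, mul_assoc]
      _ = x ^ n * (y ^ n * x) * y * c ^ n.choose 2 := by rw [← hc]; group
      _ = x ^ n * c ^ n * x * y ^ n * y * c ^ n.choose 2 := by rw [hswap]; group
      _ = c ^ n * (x ^ (n + 1) * y ^ (n + 1)) * c ^ n.choose 2 := by rw [hc n (x ^ n)]; group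
      _ = x ^ (n + 1) * y ^ (n + 1) * (c ^ n * c ^ n.choose 2) := by rw [← hc n]; group
      _ = x ^ (n + 1) * y ^ (n + 1) * c ^ (n + 1).choose 2 := by
          rw [← pow_add, Nat.choose_succ_succ', Nat.choose_one_right]

lemma mul_pow_of_central_of_odd (hG : ∀ a b : G, ⁅a, b⁆ ∈ center G) {p : ℕ} (hp : Odd p)
    (hcomm : ∀ a b : G, ⁅a, b⁆ ^ p = 1) (x y : G) : (x * y) ^ p = x ^ p * y ^ p := by
  obtain ⟨m, rfl⟩ := hp
  have hchoose : (2 * m + 1).choose 2 = (2 * m + 1) * m := by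
    rw [Nat.choose_two_right, Nat.add_sub_cancel, mul_left_comm, Nat.mul_div_cancel_left _ two_pos]
  rw [mul_pow_of_central hG, hchoose, pow_mul, hcomm, one_pow, mul_one]

end CentralCommutators

namespace Subgroup

variable {G : Type*} [Group G]

lemma normal_of_le_center {N : Subgroup G} (h : N ≤ center G) : N.Normal :=
  ⟨fun n hn g => by rwa [mem_center_iff.mp (h hn) g, mul_inv_cancel_right]⟩

lemma exists_le_isCoatom_subgroupOf [Finite G] {S H : Subgroup G} (h : S < H) :
    ∃ N ≤ H, S ≤ N ∧ IsCoatom (N.subgroupOf H) := by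
  have hS : S.subgroupOf H ≠ ⊤ := fun hS => h.not_ge (subgroupOf_eq_top.mp hS)
  obtain ⟨M, hM, hSM⟩ := (eq_top_or_exists_le_coatom _).resolve_left hS
  refine ⟨M.map H.subtype, map_subtype_le M, ?_, ?_⟩
  · calc S = (S.subgroupOf H).map H.subtype := by rw [subgroupOf_map_subtype, inf_eq_left.mpr h.le]
      _ ≤ M.map H.subtype := map_mono hSM
  · rwa [subgroupOf, comap_map_eq_self_of_injective (subtype_injective H)]

end Subgroup

namespace MonoidHom

variable {G G' : Type*} [Group G] [Group G'] [Finite G'] (f : G →* G')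

lemma index_le_card_of_ker_le_of_range_le {K : Subgroup G} {L : Subgroup G'}
    (hK : f.ker ≤ K) (hL : f.range ≤ L) : K.index ≤ Nat.card L :=
  calc K.index ≤ f.ker.index := Subgroup.index_antitone hK
    _ = Nat.card f.range := Subgroup.index_ker f
    _ ≤ Nat.card L := Subgroup.card_le_of_le hL

lemma card_lt_index_of_lt_ker_of_le_range [Finite G] {K : Subgroup G} {L : Subgroup G'}
    (hK : K < f.ker) (hL : L ≤ f.range) : Nat.card L < K.index :=
  calc Nat.card L ≤ Nat.card f.range := Subgroup.card_le_of_le hL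
    _ = f.ker.index := (Subgroup.index_ker f).symm
    _ < K.index := Subgroup.index_strictAnti hK

end MonoidHom

namespace IsSemiExtraspecial

variable {p : ℕ} {G : Type*} [Group G]

lemma comap_center_quotient (hses : IsSemiExtraspecial p G) (hp : p.Prime) (N : Subgroup G)
    [N.Normal] (hN : N ≤ center G) (hco : IsCoatom (N.subgroupOf (center G))) :
    (center (G ⧸ N)).comap (QuotientGroup.mk' N) = center G := by
  obtain ⟨hcard, -⟩ := hses N hN hco
  have : Finite (center (G ⧸ N)) := Nat.finite_of_card_ne_zero (hcard ▸ hp.ne_zero)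
  have hle : (center G).map (QuotientGroup.mk' N) ≤ center (G ⧸ N) := by
    rintro _ ⟨z, hz, rfl⟩
    refine mem_center_iff.mpr fun q => ?_
    obtain ⟨y, rfl⟩ := QuotientGroup.mk'_surjective N q
    rw [← map_mul, ← map_mul, mem_center_iff.mp hz y]
  -- `Z(G)` maps to a nontrivial subgroup of `Z(G ⧸ N)`, which has prime order
  have hne : Nat.card ((center G).map (QuotientGroup.mk' N)) ≠ 1 := by
    rw [Ne, card_eq_one, Subgroup.map_eq_bot_iff, QuotientGroup.ker_mk']
    exact fun h => hco.1 (subgroupOf_eq_top.mpr h)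
  have hdvd := hcard ▸ card_dvd_of_le hle
  have heq : (center G).map (QuotientGroup.mk' N) = center (G ⧸ N) :=
    eq_of_le_of_card_ge hle (by rw [hcard, (hp.eq_one_or_self_of_dvd _ hdvd).resolve_left hne])
  rw [← heq, comap_map_eq, QuotientGroup.ker_mk', sup_of_le_left hN]

lemma exists_extraspecial_quotient (hses : IsSemiExtraspecial p G) [Finite G] (hp : p.Prime)
    {S : Subgroup G} (hS : S < center G) :
    ∃ N : Subgroup G, ∃ _ : N.Normal, S ≤ N ∧ IsExtraspecial p (G ⧸ N) ∧
      (center (G ⧸ N)).comap (QuotientGroup.mk' N) = center G := by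
  obtain ⟨N, hN, hSN, hco⟩ := exists_le_isCoatom_subgroupOf hS
  have := normal_of_le_center hN
  exact ⟨N, this, hSN, hses N hN hco, hses.comap_center_quotient hp N hN hco⟩

lemma mem_center_of_forall_commutatorElement_mem (hses : IsSemiExtraspecial p G) [Finite G]
    (hp : p.Prime) {S : Subgroup G} (hS : S < center G) {g : G} (hg : ∀ y : G, ⁅y, g⁆ ∈ S) :
    g ∈ center G := by
  obtain ⟨N, _, hSN, -, hN⟩ := hses.exists_extraspecial_quotient hp hS
  rw [← hN, mem_comap, mem_center_iff]
  intro q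
  obtain ⟨y, rfl⟩ := QuotientGroup.mk'_surjective N q
  rw [← commutatorElement_eq_one_iff_mul_comm, ← map_commutatorElement, QuotientGroup.mk'_apply,
    QuotientGroup.eq_one_iff]
  exact hSN (hg y)

lemma commutatorElement_mem_center (hses : IsSemiExtraspecial p G) [Finite G] (hp : p.Prime)
    (hZ : center G ≠ ⊥) (a b : G) : ⁅a, b⁆ ∈ center G := by
  obtain ⟨N, _, -, ⟨-, hcomm⟩, hN⟩ :=
    hses.exists_extraspecial_quotient hp (bot_lt_iff_ne_bot.mpr hZ)
  rw [← hN, mem_comap, map_commutatorElement, hcomm]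
  exact commutator_mem_commutator (mem_top _) (mem_top _)

lemma pow_mem_center (hses : IsSemiExtraspecial p G) [Finite G] (hp : p.Prime)
    (hZ : center G ≠ ⊥) (g : G) : g ^ p ∈ center G := by
  obtain ⟨N, _, -, ⟨hcard, hcomm⟩, hN⟩ :=
    hses.exists_extraspecial_quotient hp (bot_lt_iff_ne_bot.mpr hZ)
  have hcentral (a b : G ⧸ N) : ⁅a, b⁆ ∈ center (G ⧸ N) :=
    hcomm ▸ commutator_mem_commutator (mem_top a) (mem_top b)
  rw [← hN, mem_comap, mem_center_iff]
  intro q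
  rw [eq_comm, ← commutatorElement_eq_one_iff_mul_comm, map_pow,
    commutatorElement_pow_left_of_central hcentral, ← hcard]
  exact congrArg Subtype.val (pow_card_eq_one' (x := (⟨_, hcentral _ q⟩ : center (G ⧸ N))))

lemma commutatorElement_pow_eq_one (hses : IsSemiExtraspecial p G) [Finite G] (hp : p.Prime)
    (hZ : center G ≠ ⊥) (a b : G) : ⁅a, b⁆ ^ p = 1 := by
  rw [← commutatorElement_pow_left_of_central (hses.commutatorElement_mem_center hp hZ),
    commutatorElement_eq_one_iff_mul_comm]
  exact (mem_center_iff.mp (hses.pow_mem_center hp hZ a) b).symm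

lemma mul_pow_prime (hses : IsSemiExtraspecial p G) [Finite G] (hp : p.Prime) (hodd : Odd p)
    (hZ : center G ≠ ⊥) (x y : G) : (x * y) ^ p = x ^ p * y ^ p :=
  mul_pow_of_central_of_odd (hses.commutatorElement_mem_center hp hZ) hodd
    (hses.commutatorElement_pow_eq_one hp hZ) x y

lemma center_le_commutator (hses : IsSemiExtraspecial p G) [Finite G] (hp : p.Prime)
    (hZ : center G ≠ ⊥) : center G ≤ commutator G := by
  have hle : commutator G ≤ center G := by
    rw [commutator_def, commutator_le]
    exact fun a _ b _ => hses.commutatorElement_mem_center hp hZ a b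
  by_contra h
  obtain ⟨N, _, hN, ⟨hcard, hcomm⟩, -⟩ :=
    hses.exists_extraspecial_quotient hp (lt_of_le_not_ge hle h)
  have habelian : commutator (G ⧸ N) = ⊥ := by
    rw [eq_bot_iff, commutator_def, commutator_le]
    rintro a - b -
    obtain ⟨x, rfl⟩ := QuotientGroup.mk'_surjective N a
    obtain ⟨y, rfl⟩ := QuotientGroup.mk'_surjective N b
    rw [mem_bot, ← map_commutatorElement, QuotientGroup.mk'_apply, QuotientGroup.eq_one_iff]
    exact hN (commutator_mem_commutator (mem_top x) (mem_top y))
  rw [hcomm, habelian, card_bot] at hcard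
  exact hp.one_lt.ne hcard

lemma pow_eq_one_of_mem_center (hses : IsSemiExtraspecial p G) [Finite G] (hp : p.Prime)
    (hodd : Odd p) (hZ : center G ≠ ⊥) {z : G} (hz : z ∈ center G) : z ^ p = 1 := by
  let P : G →* G := MonoidHom.mk' (· ^ p) (hses.mul_pow_prime hp hodd hZ)
  have hP : commutator G ≤ P.ker := by
    rw [commutator_eq_closure, closure_le]
    rintro _ ⟨a, b, rfl⟩
    exact hses.commutatorElement_pow_eq_one hp hZ a b
  exact hP (hses.center_le_commutator hp hZ hz)

lemma exists_pow_eq_one_of_notMem_center (hses : IsSemiExtraspecial p G) [Finite G]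
    (hp : p.Prime) (hodd : Odd p) (hZ : center G ≠ ⊥) {g : G} (hg : g ∉ center G) :
    ∃ x ∉ center G, x ^ p = 1 := by
  by_contra! hx
  have hB := hses.commutatorElement_mem_center hp hZ
  let P : G →* G := MonoidHom.mk' (· ^ p) (hses.mul_pow_prime hp hodd hZ)
  let C : G →* G := MonoidHom.mk' (⁅·, g⁆) fun x y => commutatorElement_mul_left_of_central hB x y g
  have hPker : P.ker ≤ center G := fun x hxP => by_contra fun h => hx x h hxP
  have hPrange : P.range ≤ center G := by
    rintro _ ⟨y, rfl⟩
    exact hses.pow_mem_center hp hZ y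
  have hCrange : center G ≤ C.range := by
    have hle : C.range ≤ center G := by
      rintro _ ⟨y, rfl⟩
      exact hB y g
    by_contra h
    exact hg (hses.mem_center_of_forall_commutatorElement_mem hp (lt_of_le_not_ge hle h)
      fun y => ⟨y, rfl⟩)
  have hCker : center G < C.ker := by
    refine SetLike.lt_iff_le_and_exists.mpr ⟨fun z hz => ?_, g, commutatorElement_self g, hg⟩
    exact commutatorElement_eq_one_iff_mul_comm.mpr (mem_center_iff.mp hz g).symm
  exact (C.card_lt_index_of_lt_ker_of_le_range hCker hCrange).not_ge
    (P.index_le_card_of_ker_le_of_range_le hPker hPrange)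

end IsSemiExtraspecial

/-- Let `p` be an odd prime and `G` a finite semi-extraspecial `p`-group. If `G` has an
automorphism acting transitively on the nontrivial cosets of `Z(G)`, then `G` has
exponent `p`. -/
theorem stmt_4 (p : ℕ) (hp : p.Prime) (hodd : Odd p) (G : Type*) [Group G] [Finite G]
    (hpG : IsPGroup p G) (hses : IsSemiExtraspecial p G)
    (φ : MulAut G)
    (htrans : ∀ x y : G, x ∉ Subgroup.center G → y ∉ Subgroup.center G →
      ∃ n : ℕ, (φ ^ n) x * y⁻¹ ∈ Subgroup.center G) :
    ∀ g : G, g ^ p = 1 := by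
  have : Fact p.Prime := ⟨hp⟩
  intro g
  rcases subsingleton_or_nontrivial G with _ | _
  · exact Subsingleton.elim _ _
  have hZ : center G ≠ ⊥ := (nontrivial_iff_ne_bot _).mp hpG.center_nontrivial
  by_cases hg : g ∈ center G
  · exact hses.pow_eq_one_of_mem_center hp hodd hZ hg
  obtain ⟨x, hx, hxp⟩ := hses.exists_pow_eq_one_of_notMem_center hp hodd hZ hg
  obtain ⟨n, hn⟩ := htrans x g hx hg
  have hg_eq : g = ((φ ^ n) x * g⁻¹)⁻¹ * (φ ^ n) x := by group
  rw [hg_eq, (Commute.mul_pow (mem_center_iff.mp (inv_mem hn) _).symm p), inv_pow,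
    hses.pow_eq_one_of_mem_center hp hodd hZ hn, ← map_pow, hxp, map_one, inv_one, one_mul]
end

section
/- Let p be a prime and let G be a finite semi-extraspecial p-group. Let δ be an automorphism of G whose order is not divisible by p, let d be the order of the restriction of δ to Z(G), and let δ' be the automorphism of G/Z(G) induced by δ^d (so δ'(x·Z(G)) = δ^d(x)·Z(G) for all x ∈ G), of order c. Then the order of δ equals c·d. -/
/-- Let `G` be a finite semi-extraspecial `p`-group, `δ` a `p'`-automorphism of `G`, `d`
the order of the restriction of `δ` to `Z(G)`, and `δ'` the automorphism of `G/Z(G)`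
induced by `δ^d`, of order `c`. Then `orderOf δ = c * d`. -/
theorem stmt_7 (p : ℕ) (hp : p.Prime) (G : Type*) [Group G] [Finite G]
    (hpG : IsPGroup p G) (hses : IsSemiExtraspecial p G)
    (δ : MulAut G) (hδ : ¬ p ∣ orderOf δ)
    (δZ : MulAut (Subgroup.center G))
    (hres : ∀ z : Subgroup.center G, (δZ z : G) = δ (z : G))
    (d : ℕ) (hd : d = orderOf δZ)
    (δ' : MulAut (G ⧸ Subgroup.center G))
    (hδ' : ∀ x : G, δ' (QuotientGroup.mk x) = QuotientGroup.mk ((δ ^ d) x))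
    (c : ℕ) (hc : c = orderOf δ') :
    orderOf δ = c * d := by
  have hn0 : orderOf δ ≠ 0 := fun h => hδ (h ▸ dvd_zero p)
  set n := orderOf δ with hn
  have hδn : δ ^ n = 1 := pow_orderOf_eq_one δ
  -- iterated restriction
  have hresk : ∀ (k : ℕ) (z : Subgroup.center G), ((δZ ^ k) z : G) = (δ ^ k) (z : G) := by
    intro k
    induction k with
    | zero => intro z; simp
    | succ k ih =>
      intro z
      rw [pow_succ', pow_succ']
      simp only [MulAut.mul_apply]
      rw [hres, ih]
  -- iterated induced automorphism
  have hδ'k : ∀ (k : ℕ) (x : G),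
      (δ' ^ k) (QuotientGroup.mk x) = QuotientGroup.mk ((δ ^ (d * k)) x) := by
    intro k
    induction k with
    | zero => intro x; simp
    | succ k ih =>
      intro x
      rw [pow_succ', MulAut.mul_apply, ih, hδ', Nat.mul_succ]
      congr 1
      rw [← MulAut.mul_apply, ← pow_add]
      ring_nf
  -- d divides n
  have hdvd_d : d ∣ n := by
    rw [hd]
    apply orderOf_dvd_of_pow_eq_one
    ext z
    rw [hresk n z, hδn]
    rfl
  -- c divides n / d
  have hc_dvd : c ∣ n / d := by
    rw [hc]
    apply orderOf_dvd_of_pow_eq_one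
    ext q
    induction q using QuotientGroup.induction_on with
    | H x =>
      rw [hδ'k, Nat.mul_div_cancel' hdvd_d, hδn]
      rfl
  have hcd_dvd_n : c * d ∣ n := by
    have h := Nat.mul_dvd_mul hc_dvd (dvd_refl d)
    rwa [Nat.div_mul_cancel hdvd_d] at h
  -- σ := δ ^ (c * d) fixes the center pointwise
  set σ := δ ^ (c * d) with hσdef
  have hσZ : ∀ w : G, w ∈ Subgroup.center G → σ w = w := by
    intro w hw
    have h1 : δZ ^ (c * d) = 1 := by
      rw [mul_comm, pow_mul, hd, pow_orderOf_eq_one, one_pow]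
    have h2 := hresk (c * d) ⟨w, hw⟩
    rw [h1] at h2
    exact h2.symm
  -- σ acts trivially on G / Z(G)
  have hσQ : ∀ x : G, x⁻¹ * σ x ∈ Subgroup.center G := by
    intro x
    have h2 : δ' ^ c = 1 := by rw [hc]; exact pow_orderOf_eq_one δ'
    have h3 := hδ'k c x
    rw [h2] at h3
    have h4 : (QuotientGroup.mk x : G ⧸ Subgroup.center G)
        = QuotientGroup.mk ((δ ^ (d * c)) x) := h3
    rw [QuotientGroup.eq] at h4
    rwa [hσdef, mul_comm c d]
  -- key formula: σ ^ k x = x * (x⁻¹ * σ x) ^ k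
  have key : ∀ (k : ℕ) (x : G), (σ ^ k) x = x * (x⁻¹ * σ x) ^ k := by
    intro k
    induction k with
    | zero => intro x; simp
    | succ k ih =>
      intro x
      rw [pow_succ', MulAut.mul_apply, ih, map_mul]
      have hz := hσQ x
      have hfix : σ ((x⁻¹ * σ x) ^ k) = (x⁻¹ * σ x) ^ k :=
        hσZ _ (pow_mem hz k)
      rw [hfix, pow_succ', ← mul_assoc, mul_inv_cancel_left]
  -- σ ^ card(center) = 1
  have hσm : σ ^ Nat.card (Subgroup.center G) = 1 := by
    ext x
    rw [key]
    have hz := hσQ x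
    have hw : (⟨x⁻¹ * σ x, hz⟩ : Subgroup.center G) ^ Nat.card (Subgroup.center G) = 1 :=
      pow_card_eq_one'
    have hw' : (x⁻¹ * σ x) ^ Nat.card (Subgroup.center G) = 1 := by
      have h5 := congrArg (Subtype.val) hw
      simp only [SubmonoidClass.coe_pow, OneMemClass.coe_one] at h5
      exact h5
    rw [hw', mul_one]
    rfl
  -- hence σ = 1
  haveI : Fact p.Prime := ⟨hp⟩
  obtain ⟨e, he⟩ := (hpG.to_subgroup (Subgroup.center G)).exists_card_eq
  have hord_dvd_pe : orderOf σ ∣ p ^ e := by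
    rw [← he]
    exact orderOf_dvd_of_pow_eq_one hσm
  have hord_dvd_n : orderOf σ ∣ n := orderOf_pow_dvd _
  have hcop : Nat.Coprime (orderOf σ) p := by
    have h1 : Nat.Coprime p n := (Nat.Prime.coprime_iff_not_dvd hp).mpr hδ
    exact (Nat.Coprime.coprime_dvd_right hord_dvd_n h1).symm
  have hσ1 : σ = 1 := by
    have : orderOf σ = 1 :=
      (Nat.Coprime.pow_right e hcop).eq_one_of_dvd hord_dvd_pe
    exact orderOf_eq_one_iff.mp this
  have hn_dvd_cd : n ∣ c * d := orderOf_dvd_of_pow_eq_one hσ1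
  exact Nat.dvd_antisymm hn_dvd_cd hcd_dvd_n
end

section
/- Let p be a prime and let G be a finite semi-extraspecial p-group with |G : Z(G)| = p^{2a}. If σ is an automorphism of G of order p^{2a} − 1, then σ^{p^a − 1} induces an automorphism of the quotient group G/Z(G) (sending x·Z(G) to σ^{p^a −1}(x)·Z(G)) whose order is exactly p^a + 1. -/
/-!
Write `Z = Z(G)` and `q = p^a`. A semi-extraspecial group has `Z ≤ G'`. If an automorphism `τ`
acts trivially on `G/Z`, then `x ↦ x⁻¹ τ(x)` is a homomorphism `G → Z`; it kills `G'`, hence `Z`,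
so `τ` fixes `Z` pointwise and `τⁿ(x) = x (x⁻¹ τ(x))ⁿ`. Thus `τ^|G| = 1`, and an automorphism of
order prime to `|G|` that acts trivially on `G/Z` is the identity. So `ρ = σ^(q-1)`, whose order
`(q² - 1)/(q - 1) = q + 1` is prime to `p`, induces on `G/Z` an automorphism of the same order.
-/

theorem Nat.coprime_pow_sub_one_self {p n : ℕ} (hp : p ≠ 0) (hn : n ≠ 0) :
    (p ^ n - 1).Coprime p :=
  have hcop : (p ^ n).Coprime (p ^ n - 1) :=
    (Nat.coprime_self_sub_right (Nat.one_le_pow _ _ (Nat.pos_of_ne_zero hp))).mpr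
      (Nat.coprime_one_right _)
  hcop.symm.coprime_dvd_right (dvd_pow_self p hn)

open Subgroup

section

variable {G : Type*} [Group G]

theorem Subgroup.normal_of_le_center_s13 {N : Subgroup G} (h : N ≤ center G) : N.Normal :=
  ⟨fun n hn g => by rwa [mem_center_iff.mp (h hn) g, mul_inv_cancel_right]⟩

theorem QuotientGroup.mk_mem_center {N : Subgroup G} [N.Normal] {z : G} (hz : z ∈ center G) :
    (z : G ⧸ N) ∈ center (G ⧸ N) :=
  mem_center_iff.mpr fun g => by
    induction g using QuotientGroup.induction_on with
    | H x => exact congrArg _ (mem_center_iff.mp hz x)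

theorem QuotientGroup.commutator_eq_map (N : Subgroup G) [N.Normal] :
    commutator (G ⧸ N) = (commutator G).map (QuotientGroup.mk' N) := by
  rw [commutator_def, commutator_def, map_commutator,
    map_top_of_surjective _ (QuotientGroup.mk'_surjective N)]

/- If `Z(G) ⊈ G'`, take a maximal subgroup `N` of `Z(G)` containing `Z(G) ∩ G'`. In the
extraspecial quotient `G/N` the center `Z(G)/N` lies in `G'N/N`, so `Z(G) ≤ (Z(G) ∩ G')N = N`. -/
theorem IsSemiExtraspecial.center_le_commutator_s13 [Finite G] {p : ℕ}
    (hG : IsSemiExtraspecial p G) : center G ≤ commutator G := by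
  by_contra hZ
  obtain hW | ⟨K, hK, hWK⟩ := eq_top_or_exists_le_coatom ((commutator G).subgroupOf (center G))
  · exact hZ (subgroupOf_eq_top.mp hW)
  set N : Subgroup G := K.map (center G).subtype
  have hNZ : N ≤ center G := map_subtype_le K
  have : N.Normal := normal_of_le_center_s13 hNZ
  have hNK : N.subgroupOf (center G) = K :=
    comap_map_eq_self_of_injective (center G).subtype_injective K
  have hext := (hG N hNZ (hNK ▸ hK)).2
  refine hK.1 (eq_top_iff.mpr fun ⟨z, hz⟩ _ => ?_)
  rw [← hNK]
  change z ∈ N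
  have hzc := QuotientGroup.mk_mem_center (N := N) hz
  rw [hext, QuotientGroup.commutator_eq_map] at hzc
  obtain ⟨c, hc, hcz⟩ := hzc
  have hcz' : c⁻¹ * z ∈ N := QuotientGroup.eq.mp hcz
  have hcZ : c ∈ center G := by
    simpa using (center G).mul_mem hz ((center G).inv_mem (hNZ hcz'))
  have hcN : c ∈ N := ⟨⟨c, hcZ⟩, hWK hc, rfl⟩
  simpa using N.mul_mem hcN hcz'

end

open scoped IsMulCommutative

namespace MulAut

variable {G : Type*} [Group G]

def centralDisplacement (τ : MulAut G) (hτ : ∀ x, x⁻¹ * τ x ∈ center G) : G →* center G where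
  toFun x := ⟨x⁻¹ * τ x, hτ x⟩
  map_one' := by ext; simp
  map_mul' x y := by
    ext
    have hc := mem_center_iff.mp (hτ x) y⁻¹
    simp only [map_mul, mul_inv_rev, Subgroup.coe_mul]
    rw [show y⁻¹ * x⁻¹ * (τ x * τ y) = y⁻¹ * (x⁻¹ * τ x) * τ y by group, hc, mul_assoc]

theorem apply_eq_self_of_mem_commutator {τ : MulAut G} (hτ : ∀ x, x⁻¹ * τ x ∈ center G)
    {z : G} (hz : z ∈ commutator G) : τ z = z := by
  have hker : z⁻¹ * τ z = 1 :=
    congrArg Subtype.val (Abelianization.commutator_subset_ker (centralDisplacement τ hτ) hz)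
  exact (inv_mul_eq_one.mp hker).symm

theorem pow_apply_of_center_le_commutator (hZ : center G ≤ commutator G) {τ : MulAut G}
    (hτ : ∀ x, x⁻¹ * τ x ∈ center G) (n : ℕ) (x : G) :
    (τ ^ n) x = x * (x⁻¹ * τ x) ^ n := by
  induction n with
  | zero => simp
  | succ n ih =>
    have hfix := apply_eq_self_of_mem_commutator hτ (hZ (hτ x))
    rw [pow_succ', mul_apply, ih, map_mul, map_pow, hfix, pow_succ', ← mul_assoc,
      mul_inv_cancel_left]

theorem pow_card_eq_one_of_center_le_commutator [Finite G] (hZ : center G ≤ commutator G)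
    {τ : MulAut G} (hτ : ∀ x, x⁻¹ * τ x ∈ center G) : τ ^ Nat.card G = 1 := by
  ext x
  rw [pow_apply_of_center_le_commutator hZ hτ, pow_card_eq_one', mul_one, one_apply]

theorem eq_one_of_coprime_of_center_le_commutator [Finite G] (hZ : center G ≤ commutator G)
    {τ : MulAut G} (hτ : ∀ x, x⁻¹ * τ x ∈ center G) (hcop : (orderOf τ).Coprime (Nat.card G)) :
    τ = 1 :=
  orderOf_eq_one_iff.mp <| hcop.eq_one_of_dvd <|
    orderOf_dvd_of_pow_eq_one (pow_card_eq_one_of_center_le_commutator hZ hτ)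

theorem pow_apply_mk {N : Subgroup G} [N.Normal] {σ : MulAut (G ⧸ N)} {ρ : MulAut G}
    (h : ∀ x : G, σ x = (ρ x : G ⧸ N)) (n : ℕ) (x : G) : (σ ^ n) x = ((ρ ^ n) x : G ⧸ N) := by
  induction n with
  | zero => rfl
  | succ n ih => rw [pow_succ', mul_apply, ih, h, pow_succ', mul_apply]

theorem pow_eq_one_of_pow_eq_one {N : Subgroup G} [N.Normal] {σ : MulAut (G ⧸ N)}
    {ρ : MulAut G} (h : ∀ x : G, σ x = (ρ x : G ⧸ N)) {n : ℕ} (hρ : ρ ^ n = 1) : σ ^ n = 1 := by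
  ext x
  induction x using QuotientGroup.induction_on with
  | H x => rw [pow_apply_mk h, hρ, one_apply, one_apply]

theorem orderOf_eq_of_apply_mk [Finite G] (hZ : center G ≤ commutator G)
    {σ : MulAut (G ⧸ center G)} {ρ : MulAut G} (h : ∀ x : G, σ x = (ρ x : G ⧸ center G))
    (hcop : (orderOf ρ).Coprime (Nat.card G)) : orderOf σ = orderOf ρ := by
  refine orderOf_eq_orderOf_iff.mpr fun n => ⟨fun hσ => ?_, pow_eq_one_of_pow_eq_one h⟩
  have hcentral : ∀ x, x⁻¹ * (ρ ^ n) x ∈ center G := fun x => by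
    rw [← QuotientGroup.eq, ← pow_apply_mk h, hσ, one_apply]
  exact eq_one_of_coprime_of_center_le_commutator hZ hcentral
    (hcop.coprime_dvd_left (orderOf_pow_dvd n))

end MulAut

theorem stmt_13_general (p a : ℕ) (hp : p.Prime) (G : Type*) [Group G] [Finite G]
    (hpG : IsPGroup p G) (hses : IsSemiExtraspecial p G)
    (σ : MulAut G) (hσ : orderOf σ = p ^ (2 * a) - 1)
    (σ' : MulAut (G ⧸ Subgroup.center G))
    (hσ' : ∀ x : G, σ' (QuotientGroup.mk x) = QuotientGroup.mk ((σ ^ (p ^ a - 1)) x)) :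
    orderOf σ' = p ^ a + 1 := by
  have : Fact p.Prime := ⟨hp⟩
  obtain ⟨s, hcard⟩ := IsPGroup.iff_card.mp hpG
  have ha : a ≠ 0 := by
    rintro rfl
    exact (orderOf_pos σ).ne' (by simpa using hσ)
  have hq : p ^ a - 1 ≠ 0 := Nat.sub_ne_zero_of_lt (Nat.one_lt_pow ha hp.one_lt)
  have hfactor : p ^ (2 * a) - 1 = (p ^ a + 1) * (p ^ a - 1) := by
    rw [mul_comm, pow_mul, ← Nat.sq_sub_sq, one_pow]
  have hcop : (orderOf σ).Coprime (Nat.card G) := by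
    rw [hσ, hcard]
    exact (Nat.coprime_pow_sub_one_self hp.ne_zero (by omega)).pow_right s
  rw [MulAut.orderOf_eq_of_apply_mk hses.center_le_commutator_s13 hσ'
      (hcop.coprime_dvd_left (orderOf_pow_dvd _)),
    orderOf_pow_of_dvd hq (hσ ▸ hfactor ▸ dvd_mul_left _ _), hσ, hfactor,
    Nat.mul_div_cancel _ (Nat.pos_of_ne_zero hq)]

/-- Let `G` be a finite semi-extraspecial `p`-group with `|G : Z(G)| = p^(2a)`. If `σ` is
an automorphism of `G` of order `p^(2a) - 1`, then `σ^(p^a - 1)` induces an automorphism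
of `G/Z(G)` whose order is exactly `p^a + 1`. -/
theorem stmt_13 (p a : ℕ) (hp : p.Prime) (G : Type*) [Group G] [Finite G]
    (hpG : IsPGroup p G) (hses : IsSemiExtraspecial p G)
    (hindex : (Subgroup.center G).index = p ^ (2 * a))
    (σ : MulAut G) (hσ : orderOf σ = p ^ (2 * a) - 1)
    (σ' : MulAut (G ⧸ Subgroup.center G))
    (hσ' : ∀ x : G, σ' (QuotientGroup.mk x) = QuotientGroup.mk ((σ ^ (p ^ a - 1)) x)) :
    orderOf σ' = p ^ a + 1 :=
  stmt_13_general p a hp G hpG hses σ hσ σ' hσ'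
end
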